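/- Let X, Y ⊆ 2^ω be disjoint sets and let M = X ∪ Y with the subspace topology from 2^ω. Suppose X² \ Δ is relatively F_σ in X² ∪ Y², i.e., there is an F_σ subset H of 2^ω × 2^ω with H ∩ (X² ∪ Y²) = X² \ Δ, where Δ = {(x,x) : x ∈ 2^ω}. Let M(X) denote M with the topology generated by the open sets of M together with the singletons {x} for x ∈ X, and give M(X) × M(X) the product topology. Then the subset M₁ = (X² \ Δ) ∪ Y², with the subspace topology inherited from M(X) × M(X), is metrizable. -/

import Mathlib

/-!
Points of `M₁` in `X² \ Δ` are isolated, while near a point of `Y²` the topology of `M₁` is that of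
the Cantor square. Write `X² \ Δ = ⋃ Cₙ` with `Cₙ` closed and disjoint from `Y²`, and weight a point
by `δ p = 2⁻ⁿ` for the least `n` with `p ∈ Cₙ` (`δ = 0` on `Y²`); closedness of the `Cₙ` makes `δ`
continuous at `Y²`. With `d` a metric on the Cantor square, `ρ p q = max (d p q) (max (δ p) (δ q))`
for `p ≠ q` is then a metric on `M₁` inducing its topology: its balls of radius `δ p` around points
of `X² \ Δ` are singletons, and around points of `Y²` its balls are `d`-balls cut down to `δ < ε`.
-/

open Topology

/-- A set is `F_σ` if it is a countable union of closed sets. -/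
def IsFsigma {Z : Type*} [TopologicalSpace Z] (S : Set Z) : Prop :=
  ∃ C : ℕ → Set Z, (∀ n, IsClosed (C n)) ∧ S = ⋃ n, C n

/-- The Michael-line-like topology `M(X)`: the topology generated by the open
sets of `M` together with the singletons `{x}` for `x ∈ X`. -/
def michael {M : Type*} (t : TopologicalSpace M) (X : Set M) : TopologicalSpace M :=
  TopologicalSpace.generateFrom ({U | IsOpen[t] U} ∪ {S | ∃ x ∈ X, S = {x}})

open Filter

section IsolatingDist

variable {S P : Type*} [MetricSpace P] (π : S → P) (δ : S → ℝ)

open Classical in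
noncomputable def isolatingDist (a b : S) : ℝ :=
  if a = b then 0 else max (dist (π a) (π b)) (max (δ a) (δ b))

variable {π δ}

@[simp]
theorem isolatingDist_self (a : S) : isolatingDist π δ a a = 0 := if_pos rfl

theorem isolatingDist_of_ne {a b : S} (h : a ≠ b) :
    isolatingDist π δ a b = max (dist (π a) (π b)) (max (δ a) (δ b)) := if_neg h

theorem isolatingDist_comm (a b : S) : isolatingDist π δ a b = isolatingDist π δ b a := by
  obtain rfl | h := eq_or_ne a b
  · rfl
  · rw [isolatingDist_of_ne h, isolatingDist_of_ne h.symm, dist_comm, max_comm (δ a)]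

theorem dist_le_isolatingDist (a b : S) : dist (π a) (π b) ≤ isolatingDist π δ a b := by
  obtain rfl | h := eq_or_ne a b
  · simp
  · exact (isolatingDist_of_ne h).ge.trans' (le_max_left _ _)

theorem isolatingDist_nonneg (a b : S) : 0 ≤ isolatingDist π δ a b :=
  dist_nonneg.trans (dist_le_isolatingDist a b)

theorem le_isolatingDist_left {a b : S} (h : a ≠ b) : δ a ≤ isolatingDist π δ a b := by
  rw [isolatingDist_of_ne h]
  exact le_max_of_le_right (le_max_left _ _)

theorem le_isolatingDist_right {a b : S} (h : a ≠ b) : δ b ≤ isolatingDist π δ a b := by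
  rw [isolatingDist_comm]
  exact le_isolatingDist_left h.symm

theorem isolatingDist_triangle (a b c : S) :
    isolatingDist π δ a c ≤ isolatingDist π δ a b + isolatingDist π δ b c := by
  obtain rfl | hac := eq_or_ne a c
  · simpa using add_nonneg (isolatingDist_nonneg a b) (isolatingDist_nonneg b a)
  obtain rfl | hab := eq_or_ne a b
  · simp
  obtain rfl | hbc := eq_or_ne b c
  · simp
  rw [isolatingDist_of_ne hac]
  refine max_le ((dist_triangle _ _ _).trans
    (add_le_add (dist_le_isolatingDist a b) (dist_le_isolatingDist b c))) (max_le ?_ ?_)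
  · exact (le_isolatingDist_left hab).trans (le_add_of_nonneg_right (isolatingDist_nonneg b c))
  · exact (le_isolatingDist_right hbc).trans (le_add_of_nonneg_left (isolatingDist_nonneg a b))

theorem eq_of_isolatingDist_eq_zero (hπ : Function.Injective π) {a b : S}
    (h : isolatingDist π δ a b = 0) : a = b :=
  hπ <| dist_le_zero.mp <| h ▸ dist_le_isolatingDist a b

theorem isolatingDist_lt_iff_of_eq_zero {a : S} (ha : δ a = 0) {ε : ℝ} (hε : 0 < ε) (b : S) :
    isolatingDist π δ a b < ε ↔ dist (π a) (π b) < ε ∧ δ b < ε := by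
  obtain rfl | h := eq_or_ne a b
  · simp [ha, hε]
  · simp [isolatingDist_of_ne h, ha, hε]

variable [TopologicalSpace S]

theorem nhds_basis_isolatingDist (hδ : ∀ a, 0 ≤ δ a) (hiso : ∀ a, 0 < δ a → IsOpen {a})
    (hind : ∀ a, δ a = 0 → 𝓝 a = comap π (𝓝 (π a))) (hcont : ∀ a, δ a = 0 → ContinuousAt δ a)
    (a : S) : (𝓝 a).HasBasis (0 < ·) (fun ε => {b | isolatingDist π δ a b < ε}) := by
  refine ⟨fun U => ?_⟩
  obtain h0 | hpos := (hδ a).eq_or_lt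
  · refine ⟨fun hU => ?_, fun ⟨ε, hε, hU⟩ => mem_of_superset ?_ hU⟩
    · rw [hind a h0.symm, (Metric.nhds_basis_ball.comap π).mem_iff] at hU
      obtain ⟨ε, hε, hU⟩ := hU
      refine ⟨ε, hε, fun b hb => hU ?_⟩
      rw [Set.mem_preimage, Metric.mem_ball, dist_comm]
      exact (dist_le_isolatingDist a b).trans_lt hb
    · have hπ : ∀ᶠ b in 𝓝 a, dist (π a) (π b) < ε := by
        rw [hind a h0.symm]
        exact tendsto_comap.eventually (p := fun q => dist (π a) q < ε)
          (Metric.eventually_nhds_iff.mpr ⟨ε, hε, fun q hq => by rwa [dist_comm]⟩)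
      have hδ : ∀ᶠ b in 𝓝 a, δ b < ε :=
        (hcont a h0.symm).eventually (eventually_lt_nhds (h0 ▸ hε))
      filter_upwards [hπ, hδ] with b hπb hδb
      exact (isolatingDist_lt_iff_of_eq_zero h0.symm hε b).mpr ⟨hπb, hδb⟩
  · rw [(isOpen_singleton_iff_nhds_eq_pure a).mp (hiso a hpos), mem_pure]
    refine ⟨fun ha => ⟨δ a, hpos, fun b hb => ?_⟩, fun ⟨ε, hε, hU⟩ => hU (by simpa using hε)⟩
    by_contra hbU
    exact (le_isolatingDist_left (ne_of_mem_of_not_mem ha hbU)).not_gt hb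

end IsolatingDist

theorem metrizableSpace_of_isolated_or_inducing {S P : Type*} [TopologicalSpace S]
    [TopologicalSpace P] [TopologicalSpace.MetrizableSpace P] {π : S → P} {δ : S → ℝ}
    (hπ : Function.Injective π) (hδ : ∀ a, 0 ≤ δ a) (hiso : ∀ a, 0 < δ a → IsOpen {a})
    (hind : ∀ a, δ a = 0 → 𝓝 a = comap π (𝓝 (π a))) (hcont : ∀ a, δ a = 0 → ContinuousAt δ a) :
    TopologicalSpace.MetrizableSpace S := by
  let _ := TopologicalSpace.metrizableSpaceMetric P
  let _ := MetricSpace.ofDistTopology (isolatingDist π δ) isolatingDist_self isolatingDist_comm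
    isolatingDist_triangle
    (fun s => by
      simp only [isOpen_iff_mem_nhds, (nhds_basis_isolatingDist hδ hiso hind hcont _).mem_iff]
      rfl)
    (fun _ _ => eq_of_isolatingDist_eq_zero hπ)
  infer_instance

section Michael

variable {M : Type*} [t : TopologicalSpace M] {X : Set M}

theorem isOpen_singleton_michael {x : M} (hx : x ∈ X) : IsOpen[michael t X] {x} :=
  TopologicalSpace.GenerateOpen.basic _ (Or.inr ⟨x, hx, rfl⟩)

theorem nhds_michael_of_notMem {y : M} (hy : y ∉ X) : @nhds M (michael t X) y = @nhds M t y := by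
  rw [michael, TopologicalSpace.nhds_generateFrom, @nhds_def M t]
  congr! 3 with s
  simp only [Set.mem_ofPred_eq, Set.mem_union]
  refine and_congr_right fun hys => or_iff_left ?_
  rintro ⟨x, hx, rfl⟩
  exact hy (Set.mem_singleton_iff.mp hys ▸ hx)

theorem isOpen_singleton_prod_michael {p : M × M} (h1 : p.1 ∈ X) (h2 : p.2 ∈ X) :
    IsOpen[@instTopologicalSpaceProd M M (michael t X) (michael t X)] {p} := by
  rw [← Prod.mk.eta (p := p), ← Set.singleton_prod_singleton]
  exact @IsOpen.prod M M (michael t X) (michael t X) _ _ (isOpen_singleton_michael h1)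
    (isOpen_singleton_michael h2)

theorem nhds_prod_michael_of_notMem {p : M × M} (h1 : p.1 ∉ X) (h2 : p.2 ∉ X) :
    @nhds (M × M) (@instTopologicalSpaceProd M M (michael t X) (michael t X)) p = 𝓝 p := by
  rw [← Prod.mk.eta (p := p), @nhds_prod_eq M M (michael t X) (michael t X), nhds_prod_eq,
    nhds_michael_of_notMem h1, nhds_michael_of_notMem h2]

end Michael

section FirstHitWeight

variable {P : Type*} (C : ℕ → Set P)

open Classical in
noncomputable def firstHitWeight (p : P) : ℝ :=
  if h : ∃ n, p ∈ C n then 2⁻¹ ^ Nat.find h else 0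

variable {C}

theorem firstHitWeight_nonneg (p : P) : 0 ≤ firstHitWeight C p := by
  unfold firstHitWeight
  split_ifs <;> positivity

theorem firstHitWeight_pos_iff {p : P} : 0 < firstHitWeight C p ↔ p ∈ ⋃ n, C n := by
  unfold firstHitWeight
  rw [Set.mem_iUnion]
  split_ifs with h <;> simp [h]

theorem firstHitWeight_lt_of_forall_notMem {p : P} {N : ℕ} (h : ∀ n ≤ N, p ∉ C n) :
    firstHitWeight C p < 2⁻¹ ^ N := by
  classical
  unfold firstHitWeight
  split_ifs with hp
  · refine pow_lt_pow_right_of_lt_one₀ (by norm_num) (by norm_num) ?_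
    by_contra! hle
    exact h _ hle (Nat.find_spec hp)
  · positivity

theorem continuousAt_firstHitWeight [TopologicalSpace P] (hC : ∀ n, IsClosed (C n)) {p : P}
    (hp : p ∉ ⋃ n, C n) : ContinuousAt (firstHitWeight C) p := by
  have h0 : firstHitWeight C p = 0 :=
    (firstHitWeight_nonneg p).antisymm' (not_lt.mp (mt firstHitWeight_pos_iff.mp hp))
  rw [ContinuousAt, h0, tendsto_order]
  refine ⟨fun b hb => .of_forall fun q => hb.trans_le (firstHitWeight_nonneg q), fun ε hε => ?_⟩
  obtain ⟨N, hN⟩ := exists_pow_lt_of_lt_one hε (by norm_num : (2⁻¹ : ℝ) < 1)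
  have hK : IsClosed (⋃ n ∈ Set.Iic N, C n) :=
    (Set.finite_Iic N).isClosed_biUnion fun n _ => hC n
  have hpK : p ∈ (⋃ n ∈ Set.Iic N, C n)ᶜ := by
    simp only [Set.mem_iUnion, not_exists] at hp
    simpa using fun n _ => hp n
  filter_upwards [hK.isOpen_compl.mem_nhds hpK] with q hq
  simp only [Set.mem_compl_iff, Set.mem_iUnion, Set.mem_Iic, not_exists] at hq
  exact (firstHitWeight_lt_of_forall_notMem hq).trans hN

end FirstHitWeight

theorem metrizableSpace_michael_prod_subspace {M P : Type*} [t : TopologicalSpace M]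
    [TopologicalSpace P] [TopologicalSpace.MetrizableSpace P] {e : M → P} (he : IsEmbedding e)
    {X : Set M} {S : Set (M × M)} {H : Set (P × P)} (hH : IsFsigma H)
    (hX : ∀ p ∈ S, Prod.map e e p ∈ H → p.1 ∈ X ∧ p.2 ∈ X)
    (hY : ∀ p ∈ S, Prod.map e e p ∉ H → p.1 ∉ X ∧ p.2 ∉ X) :
    @TopologicalSpace.MetrizableSpace S (@instTopologicalSpaceSubtype (M × M) _
      (@instTopologicalSpaceProd M M (michael t X) (michael t X))) := by
  obtain ⟨C, hC, rfl⟩ := hH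
  let _ : TopologicalSpace S :=
    @instTopologicalSpaceSubtype _ _ (@instTopologicalSpaceProd M M (michael t X) (michael t X))
  set π : S → P × P := fun a => Prod.map e e a.1
  have hind : ∀ a, π a ∉ ⋃ n, C n → 𝓝 a = comap π (𝓝 (π a)) := fun a ha => by
    obtain ⟨h1, h2⟩ := hY a a.2 ha
    rw [@nhds_subtype _ (@instTopologicalSpaceProd M M (michael t X) (michael t X)),
      nhds_prod_michael_of_notMem h1 h2, (he.prodMap he).nhds_eq_comap, comap_comap]
    rfl
  have hzero : ∀ a, firstHitWeight C (π a) = 0 → π a ∉ ⋃ n, C n := fun a ha hmem =>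
    (firstHitWeight_pos_iff.mpr hmem).ne' ha
  refine metrizableSpace_of_isolated_or_inducing (δ := firstHitWeight C ∘ π)
    ((he.injective.prodMap he.injective).comp Subtype.val_injective)
    (fun _ => firstHitWeight_nonneg _) (fun a ha => ?_) (fun a ha => hind a (hzero a ha))
    (fun a ha => ?_)
  · obtain ⟨h1, h2⟩ := hX a a.2 (firstHitWeight_pos_iff.mp ha)
    have : Subtype.val ⁻¹' {a.1} = ({a} : Set S) := by ext; simp [Subtype.ext_iff]
    exact ⟨{a.1}, isOpen_singleton_prod_michael h1 h2, this⟩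
  · rw [ContinuousAt, hind a (hzero a ha)]
    exact (continuousAt_firstHitWeight hC (hzero a ha)).tendsto.comp tendsto_comap

/-- If `X, Y ⊆ 2^ω` are disjoint, `M = X ∪ Y` with the subspace topology, and
`X² \ Δ` is relatively `F_σ` in `X² ∪ Y²`, then `M₁ = (X² \ Δ) ∪ Y²` is a
metrizable subspace of `M(X) × M(X)`. -/
theorem stmt14 (X Y : Set (ℕ → Bool)) (hdisj : Disjoint X Y)
    (H : Set ((ℕ → Bool) × (ℕ → Bool))) (hH : IsFsigma H)
    (hHcap : H ∩ (X ×ˢ X ∪ Y ×ˢ Y) = (X ×ˢ X) \ Set.diagonal (ℕ → Bool)) :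
    @TopologicalSpace.MetrizableSpace
      ↥({p : ↥(X ∪ Y) × ↥(X ∪ Y) |
          ((p.1 : ℕ → Bool) ∈ X ∧ (p.2 : ℕ → Bool) ∈ X ∧ p.1 ≠ p.2) ∨
          ((p.1 : ℕ → Bool) ∈ Y ∧ (p.2 : ℕ → Bool) ∈ Y)})
      (@instTopologicalSpaceSubtype (↥(X ∪ Y) × ↥(X ∪ Y)) _
        (@instTopologicalSpaceProd (↥(X ∪ Y)) (↥(X ∪ Y))
          (michael inferInstance {m : ↥(X ∪ Y) | (m : ℕ → Bool) ∈ X})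
          (michael inferInstance {m : ↥(X ∪ Y) | (m : ℕ → Bool) ∈ X}))) := by
  have hH_iff : ∀ q ∈ X ×ˢ X ∪ Y ×ˢ Y, q ∈ H ↔ q ∈ X ×ˢ X \ Set.diagonal _ := fun q hq => by
    rw [← hHcap]
    exact ⟨fun h => ⟨h, hq⟩, And.left⟩
  refine metrizableSpace_michael_prod_subspace IsEmbedding.subtypeVal hH
    (fun p hp hpH => ?_) (fun p hp hpH => ?_)
  · rcases hp with ⟨h1, h2, -⟩ | ⟨h1, h2⟩
    · exact ⟨h1, h2⟩
    · have hX := ((hH_iff _ (Or.inr ⟨h1, h2⟩)).mp hpH).1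
      exact (hdisj.notMem_of_mem_left hX.1 h1).elim
  · rcases hp with ⟨h1, h2, hne⟩ | ⟨h1, h2⟩
    · exact (hpH ((hH_iff _ (Or.inl ⟨h1, h2⟩)).mpr ⟨⟨h1, h2⟩, fun h => hne (Subtype.ext h)⟩)).elim
    · exact ⟨hdisj.notMem_of_mem_right h1, hdisj.notMem_of_mem_right h2⟩
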